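/- arXiv:2207.01699 — 3 statements merged into one kernel-verified Lean document; each statement's English description precedes it below -/
import Mathlib

section
/- Let H be a graph possibly with loops, G an H-colored complete graph such that for every x ∈ V(G), G_x is complete multipartite. Let A ⊆ V(G) with |A| ≥ 2 and v ∈ V(G) − A. If A has the H-dependence property with respect to v, then there exists a ∈ A such that l_a^D ≤ (|A|+1)/2 where D = G[A], and moreover a is an obstruction of the walk (v,a,a') for some neighbor a' of a in D. -/
variable {V C : Type*}

/-- The set of edges of `G` incident with `x` (the vertex set of the auxiliary graph `G_x`). -/
def Inc (G : SimpleGraph V) (x : V) : Set (Sym2 V) :=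
  {e | e ∈ G.edgeSet ∧ x ∈ e}

/-- `P` witnesses that the auxiliary graph `G_x` (on the edges of `G` incident with `x`,
with two distinct edges adjacent iff their colors are adjacent in `H`, i.e. related by `EH`)
is a complete `k`-partite graph with parts the fibers of `P`. -/
def IsPartitionAt (G : SimpleGraph V) (EH : C → C → Prop) (c : Sym2 V → C)
    (x : V) (k : ℕ) (P : Sym2 V → Fin k) : Prop :=
  (∀ j : Fin k, ∃ e ∈ Inc G x, P e = j) ∧
    ∀ a ∈ Inc G x, ∀ b ∈ Inc G x, a ≠ b → (EH (c a) (c b) ↔ P a ≠ P b)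

/-- `x` is an obstruction of the walk `(u, x, w)`. -/
def Obstr (EH : C → C → Prop) (c : Sym2 V → C) (u x w : V) : Prop :=
  ¬ EH (c s(u, x)) (c s(x, w))

def Exactly2Of3 (o1 o2 o3 : Prop) : Prop :=
  (¬o1 ∧ o2 ∧ o3) ∨ (o1 ∧ ¬o2 ∧ o3) ∨ (o1 ∧ o2 ∧ ¬o3)

def Exactly3Of4 (o1 o2 o3 o4 : Prop) : Prop :=
  (¬o1 ∧ o2 ∧ o3 ∧ o4) ∨ (o1 ∧ ¬o2 ∧ o3 ∧ o4) ∨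
    (o1 ∧ o2 ∧ ¬o3 ∧ o4) ∨ (o1 ∧ o2 ∧ o3 ∧ ¬o4)

/-- `G` contains a cycle of length 3 with exactly 2 obstructions. -/
def Cycle3Obstr2 (G : SimpleGraph V) (EH : C → C → Prop) (c : Sym2 V → C) : Prop :=
  ∃ x y z : V, x ≠ y ∧ x ≠ z ∧ y ≠ z ∧ G.Adj x y ∧ G.Adj y z ∧ G.Adj z x ∧
    Exactly2Of3 (Obstr EH c z x y) (Obstr EH c x y z) (Obstr EH c y z x)

/-- `G` contains a cycle of length 4 with exactly 3 obstructions. -/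
def Cycle4Obstr3 (G : SimpleGraph V) (EH : C → C → Prop) (c : Sym2 V → C) : Prop :=
  ∃ a b d e : V, a ≠ b ∧ a ≠ d ∧ a ≠ e ∧ b ≠ d ∧ b ≠ e ∧ d ≠ e ∧
    G.Adj a b ∧ G.Adj b d ∧ G.Adj d e ∧ G.Adj e a ∧
    Exactly3Of4 (Obstr EH c e a b) (Obstr EH c a b d) (Obstr EH c b d e) (Obstr EH c d e a)

/-- `v` is contained in an `H`-cycle of length 3. -/
def HCycle3Through (G : SimpleGraph V) (EH : C → C → Prop) (c : Sym2 V → C) (v : V) : Prop :=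
  ∃ x y : V, v ≠ x ∧ v ≠ y ∧ x ≠ y ∧ G.Adj v x ∧ G.Adj x y ∧ G.Adj y v ∧
    EH (c s(v, x)) (c s(x, y)) ∧ EH (c s(x, y)) (c s(y, v)) ∧ EH (c s(y, v)) (c s(v, x))

/-- `v` is contained in an `H`-cycle of length 4. -/
def HCycle4Through (G : SimpleGraph V) (EH : C → C → Prop) (c : Sym2 V → C) (v : V) : Prop :=
  ∃ x y z : V, v ≠ x ∧ v ≠ y ∧ v ≠ z ∧ x ≠ y ∧ x ≠ z ∧ y ≠ z ∧
    G.Adj v x ∧ G.Adj x y ∧ G.Adj y z ∧ G.Adj z v ∧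
    EH (c s(v, x)) (c s(x, y)) ∧ EH (c s(x, y)) (c s(y, z)) ∧
      EH (c s(y, z)) (c s(z, v)) ∧ EH (c s(z, v)) (c s(v, x))

/-- `A` has the `H`-dependence property with respect to `v`. -/
def HDep (G : SimpleGraph V) (EH : C → C → Prop) (c : Sym2 V → C) (A : Set V) (v : V) : Prop :=
  ∀ a ∈ A, ∀ a' ∈ A, a ≠ a' → G.Adj v a → G.Adj a a' → G.Adj a' v →
    (¬ EH (c s(v, a)) (c s(a, a'))) ∨ (¬ EH (c s(a, a')) (c s(a', v)))

/-- The subgraph of `G` induced by `A` (kept on the same vertex type). -/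
def inducedSub (G : SimpleGraph V) (A : Set V) : SimpleGraph V where
  Adj a b := G.Adj a b ∧ a ∈ A ∧ b ∈ A
  symm := ⟨fun a b h => ⟨h.1.symm, h.2.2, h.2.1⟩⟩
  loopless := ⟨fun a h => G.irrefl h.1⟩

theorem stmt_5 {V C : Type*} [Fintype V] (G : SimpleGraph V) (EH : C → C → Prop)
    (hsym : Symmetric EH) (c : Sym2 V → C)
    (hcomp : ∀ a b : V, a ≠ b → G.Adj a b)
    (hmulti : ∀ x : V, ∃ (k : ℕ) (P : Sym2 V → Fin k), IsPartitionAt G EH c x k P)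
    (A : Set V) (v : V) (hA2 : 2 ≤ A.ncard) (hv : v ∉ A)
    (hdep : HDep G EH c A v) :
    ∃ a ∈ A, (∃ (l : ℕ) (Q : Sym2 V → Fin l),
        IsPartitionAt (inducedSub G A) EH c a l Q ∧ 2 * l ≤ A.ncard + 1) ∧
      ∃ a' : V, (inducedSub G A).Adj a a' ∧ ¬ EH (c s(v, a)) (c s(a, a')) := by
  classical
  set n := A.ncard with hn
  have hAfin : A.Finite := A.toFinite
  set F : Finset V := hAfin.toFinset with hF
  have hmemF : ∀ x, x ∈ F ↔ x ∈ A := fun x => hAfin.mem_toFinset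
  have hFcard : F.card = n := (Set.ncard_eq_toFinset_card A hAfin).symm
  -- obstruction predicate
  set obst : V → V → Prop := fun a a' => ¬ EH (c s(v, a)) (c s(a, a')) with hobst
  have hvne : ∀ a ∈ A, v ≠ a := fun a ha h => hv (h ▸ ha)
  have hpair : ∀ a ∈ A, ∀ a' ∈ A, a ≠ a' → obst a a' ∨ obst a' a := by
    intro a ha a' ha' hne
    rcases hdep a ha a' ha' hne (hcomp _ _ (hvne a ha)) (hcomp _ _ hne)
        (hcomp _ _ (Ne.symm (hvne a' ha'))) with h | h
    · exact Or.inl h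
    · right
      intro hEH
      apply h
      have := hsym hEH
      rwa [Sym2.eq_swap (a := a'), Sym2.eq_swap (a := v)] at this
  set S : V → Finset V := fun a => (F.erase a).filter (fun a' => obst a a') with hS
  set N : V → Finset V := fun a => (F.erase a).filter (fun a' => ¬ obst a a') with hNdef
  have hSN : ∀ a ∈ F, (S a).card + (N a).card = n - 1 := by
    intro a ha
    rw [hS, hNdef]
    simp only
    rw [Finset.card_filter_add_card_filter_not, Finset.card_erase_of_mem ha, hFcard]
  -- double counting: ∑ N ≤ ∑ S
  have hcount : ∑ a ∈ F, (N a).card ≤ ∑ a ∈ F, (S a).card := by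
    rw [← Finset.card_sigma, ← Finset.card_sigma]
    apply Finset.card_le_card_of_injOn (fun p => ⟨p.2, p.1⟩)
    · rintro ⟨a, b⟩ hp
      simp only [Finset.mem_coe, Finset.mem_sigma] at hp ⊢
      obtain ⟨haF, hbN⟩ := hp
      rw [hNdef] at hbN
      simp only [Finset.mem_filter, Finset.mem_erase] at hbN
      obtain ⟨⟨hba, hbF⟩, hnob⟩ := hbN
      refine ⟨hbF, ?_⟩
      rw [hS]
      simp only [Finset.mem_filter, Finset.mem_erase]
      have hob : obst b a := by
        rcases hpair a ((hmemF a).mp haF) b ((hmemF b).mp hbF) (Ne.symm hba) with h | h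
        · exact absurd h hnob
        · exact h
      exact ⟨⟨fun h => hba (h.symm ▸ rfl), haF⟩, hob⟩
    · rintro ⟨a, b⟩ _ ⟨a', b'⟩ _ h
      have h1 : b = b' ∧ a = a' := by simpa using h
      obtain ⟨rfl, rfl⟩ := h1
      rfl
  have key : ∃ a ∈ F, n - 1 ≤ 2 * (S a).card := by
    by_contra hcon
    push_neg at hcon
    have hFne : F.Nonempty := by rw [← Finset.card_pos, hFcard]; omega
    have hEq : ∑ a ∈ F, ((S a).card + (N a).card) = ∑ a ∈ F, (n - 1) :=
      Finset.sum_congr rfl hSN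
    have e1 : ∑ a ∈ F, ((S a).card + (N a).card)
        = ∑ a ∈ F, (S a).card + ∑ a ∈ F, (N a).card := Finset.sum_add_distrib
    have e2 : ∑ a ∈ F, 2 * (S a).card = 2 * ∑ a ∈ F, (S a).card := by
      rw [Finset.mul_sum]
    have h2 : ∑ a ∈ F, 2 * (S a).card < ∑ a ∈ F, (n - 1) :=
      Finset.sum_lt_sum_of_nonempty hFne (fun a ha => hcon a ha)
    omega
  obtain ⟨a, haF, hSbig⟩ := key
  have haA : a ∈ A := (hmemF a).mp haF
  refine ⟨a, haA, ?_, ?_⟩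
  · -- the partition and the bound
    obtain ⟨k, P, hPsurj, hPiff⟩ := hmulti a
    -- edges of G at a we need
    have hvaInc : s(v, a) ∈ Inc G a :=
      ⟨G.mem_edgeSet.mpr (hcomp v a (hvne a haA)), Sym2.mem_mk_right v a⟩
    have habInc : ∀ b ∈ F.erase a, s(a, b) ∈ Inc G a := by
      intro b hb
      obtain ⟨hba, hbF⟩ := Finset.mem_erase.mp hb
      exact ⟨G.mem_edgeSet.mpr (hcomp a b (Ne.symm hba)), Sym2.mem_mk_left a b⟩
    have hvab_ne : ∀ b ∈ F.erase a, s(v, a) ≠ s(a, b) := by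
      intro b hb h
      obtain ⟨hba, hbF⟩ := Finset.mem_erase.mp hb
      rw [Sym2.eq_iff] at h
      rcases h with ⟨h1, h2⟩ | ⟨h1, h2⟩
      · exact hvne a haA h1
      · exact hv (h1 ▸ (hmemF b).mp hbF)
    -- characterization of Inc (inducedSub G A) a
    have hIncD : ∀ e, e ∈ Inc (inducedSub G A) a ↔ ∃ b, b ∈ F.erase a ∧ e = s(a, b) := by
      intro e
      constructor
      · rintro ⟨he, hae⟩
        induction e with
        | _ x y =>
          rw [SimpleGraph.mem_edgeSet] at he
          rcases Sym2.mem_iff.mp hae with rfl | rfl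
          · exact ⟨y, Finset.mem_erase.mpr ⟨Ne.symm he.1.ne, (hmemF y).mpr he.2.2⟩, rfl⟩
          · exact ⟨x, Finset.mem_erase.mpr ⟨he.1.ne, (hmemF x).mpr he.2.1⟩, Sym2.eq_swap⟩
      · rintro ⟨b, hb, rfl⟩
        obtain ⟨hba, hbF⟩ := Finset.mem_erase.mp hb
        exact ⟨(inducedSub G A).mem_edgeSet.mpr
          ⟨hcomp a b (Ne.symm hba), haA, (hmemF b).mp hbF⟩, Sym2.mem_mk_left a b⟩
    have hIncSub : ∀ e, e ∈ Inc (inducedSub G A) a → e ∈ Inc G a := by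
      intro e he
      obtain ⟨b, hb, rfl⟩ := (hIncD e).mp he
      exact habInc b hb
    -- the image of the parts
    set T : Finset (Fin k) := (F.erase a).image (fun b => P s(a, b)) with hT
    have hTmem : ∀ e ∈ Inc (inducedSub G A) a, P e ∈ T := by
      intro e he
      obtain ⟨b, hb, rfl⟩ := (hIncD e).mp he
      exact Finset.mem_image.mpr ⟨b, hb, rfl⟩
    have hTne : T.Nonempty := by
      apply Finset.image_nonempty.mpr
      rw [← Finset.card_pos, Finset.card_erase_of_mem haF, hFcard]
      omega
    obtain ⟨t0, ht0⟩ := hTne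
    set eqv : {x // x ∈ T} ≃ Fin T.card := T.equivFin with heqv
    set Q : Sym2 V → Fin T.card :=
      fun e => if h : P e ∈ T then eqv ⟨P e, h⟩ else eqv ⟨t0, ht0⟩ with hQ
    refine ⟨T.card, Q, ⟨?_, ?_⟩, ?_⟩
    · -- surjectivity
      intro j
      obtain ⟨b, hb, hPb⟩ := Finset.mem_image.mp (eqv.symm j).2
      refine ⟨s(a, b), (hIncD _).mpr ⟨b, hb, rfl⟩, ?_⟩
      have hmem : P s(a, b) ∈ T := Finset.mem_image.mpr ⟨b, hb, rfl⟩
      rw [hQ]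
      simp only [hmem, dif_pos]
      have h3 : (⟨P s(a, b), hmem⟩ : {x // x ∈ T}) = eqv.symm j := Subtype.ext hPb
      rw [h3, Equiv.apply_symm_apply]
    · -- partition property
      intro e he f hf hef
      have heG := hIncSub e he
      have hfG := hIncSub f hf
      have hPe : P e ∈ T := hTmem e he
      have hPf : P f ∈ T := hTmem f hf
      rw [hPiff e heG f hfG hef, hQ]
      simp only [hPe, hPf, dif_pos]
      constructor
      · intro hpe hc
        exact hpe (Subtype.ext_iff.mp (eqv.injective hc))
      · intro hqe hc
        exact hqe (congrArg eqv (Subtype.ext hc))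
    · -- the cardinality bound
      have hTsub : T ⊆ insert (P s(v, a)) ((N a).image (fun b => P s(a, b))) := by
        intro t ht
        obtain ⟨b, hb, rfl⟩ := Finset.mem_image.mp ht
        by_cases hob : obst a b
        · have hne := hvab_ne b hb
          have hiff := hPiff s(v, a) hvaInc s(a, b) (habInc b hb) hne
          simp only [hobst] at hob
          have hpe : P s(v, a) = P s(a, b) := by
            by_contra hc
            exact hob (hiff.mpr hc)
          rw [← hpe]
          exact Finset.mem_insert_self _ _
        · apply Finset.mem_insert_of_mem
          apply Finset.mem_image.mpr
          refine ⟨b, ?_, rfl⟩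
          simp only [hNdef, Finset.mem_filter]
          exact ⟨hb, hob⟩
      have hTcard : T.card ≤ (N a).card + 1 := by
        calc T.card ≤ (insert (P s(v, a)) ((N a).image (fun b => P s(a, b)))).card :=
              Finset.card_le_card hTsub
          _ ≤ ((N a).image (fun b => P s(a, b))).card + 1 := Finset.card_insert_le _ _
          _ ≤ (N a).card + 1 := by
              have := Finset.card_image_le (s := N a) (f := fun b => P s(a, b))
              omega
      have := hSN a haF
      omega
  · -- the obstruction witness
    have hSpos : (S a).Nonempty := by
      rw [← Finset.card_pos]
      omega
    obtain ⟨a', ha'⟩ := hSpos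
    rw [hS] at ha'
    simp only [Finset.mem_filter, Finset.mem_erase] at ha'
    obtain ⟨⟨ha'a, ha'F⟩, hob⟩ := ha'
    exact ⟨a', ⟨hcomp a a' (Ne.symm ha'a), haA, (hmemF a').mp ha'F⟩, hob⟩
end

section
/- Let G be an edge-colored complete graph of order n ≥ 3 such that every vertex x has color degree δ^c(x) ≥ (n+1)/2. Then every vertex of G is contained in a properly colored cycle of length 3. -/
/-!
Suppose `v` lies on no properly colored triangle and give each `u ≠ v` the color `c(vu)`. Then
for `x, y ≠ v` of different colors, `c(xy)` is one of those two colors. Let `U` be the vertices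
whose color no other neighbor of `v` has, and `q` the number of colors carried at least twice:
then `|U| + 2q ≤ n - 1`, while the color degree of `v` is `|U| + q`, which forces `U ≠ ∅`.
A vertex `x ∈ U` sees only its own color, the `q` repeated colors, and the colors `c(vu)` of
those `u ∈ U` with `c(xu) = c(vu)`. The latter relation is a tournament on `U`, so some `x ∈ U`
has at most `(|U| - 1)/2` such `u`, and then its color degree is at most `(|U| + 2q + 1)/2 ≤ n/2`.
-/

open Finset

namespace Finset

section UniqueFiber

variable {α β : Type*} [DecidableEq α] [DecidableEq β] (f : α → β) (W : Finset α)

def uniqueFiberPoints : Finset α := {x ∈ W | ∀ u ∈ W, f u = f x → u = x}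

def sharedValues : Finset β := (W \ uniqueFiberPoints f W).image f

variable {f W}

lemma uniqueFiberPoints_subset : uniqueFiberPoints f W ⊆ W := filter_subset _ _

lemma eq_of_mem_uniqueFiberPoints {x u : α} (hx : x ∈ uniqueFiberPoints f W) (hu : u ∈ W)
    (h : f u = f x) : u = x :=
  (mem_filter.1 hx).2 u hu h

lemma injOn_uniqueFiberPoints : Set.InjOn f (uniqueFiberPoints f W) := fun _ hx _ hy hxy =>
  eq_of_mem_uniqueFiberPoints hy (uniqueFiberPoints_subset hx) hxy

lemma mem_sharedValues_of_notMem_uniqueFiberPoints {x : α} (hx : x ∈ W)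
    (hxU : x ∉ uniqueFiberPoints f W) : f x ∈ sharedValues f W :=
  mem_image_of_mem f (mem_sdiff.2 ⟨hx, hxU⟩)

lemma card_image_eq_card_uniqueFiberPoints_add_card_sharedValues :
    (W.image f).card = (uniqueFiberPoints f W).card + (sharedValues f W).card := by
  have hdisj : Disjoint ((uniqueFiberPoints f W).image f) (sharedValues f W) := by
    simp only [sharedValues, disjoint_left, mem_image, mem_sdiff]
    rintro _ ⟨x, hxU, rfl⟩ ⟨u, ⟨hu, huU⟩, hux⟩
    exact huU (eq_of_mem_uniqueFiberPoints hxU hu hux ▸ hxU)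
  rw [← card_image_of_injOn injOn_uniqueFiberPoints, ← card_union_of_disjoint hdisj, sharedValues,
    ← image_union, union_sdiff_of_subset uniqueFiberPoints_subset]

lemma card_uniqueFiberPoints_add_two_mul_card_sharedValues_le :
    (uniqueFiberPoints f W).card + 2 * (sharedValues f W).card ≤ W.card := by
  have hfiber : ∀ b ∈ sharedValues f W, 2 ≤ {a ∈ W \ uniqueFiberPoints f W | f a = b}.card := by
    simp only [sharedValues, mem_image, mem_sdiff]
    rintro _ ⟨x, ⟨hx, hxU⟩, rfl⟩
    obtain ⟨u, hu, hux, hne⟩ : ∃ u ∈ W, f u = f x ∧ u ≠ x := by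
      simpa [uniqueFiberPoints, hx] using hxU
    have huU : u ∉ uniqueFiberPoints f W := fun huU =>
      hne (eq_of_mem_uniqueFiberPoints huU hx hux.symm).symm
    exact one_lt_card.2 ⟨u, by simp [hu, huU, hux], x, by simp [hx, hxU], hne⟩
  have := mul_card_image_le_card_of_maps_to (t := sharedValues f W)
    (fun a ha => mem_image_of_mem f ha) 2 hfiber
  rw [card_sdiff_of_subset uniqueFiberPoints_subset] at this
  have := card_le_card (uniqueFiberPoints_subset (f := f) (W := W))
  omega

end UniqueFiber

lemma exists_two_mul_card_le_of_asymm {α : Type*} [DecidableEq α] {S : Finset α}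
    (hS : S.Nonempty) (R : α → α → Prop) [DecidableRel R]
    (hR : ∀ x ∈ S, ∀ y ∈ S, x ≠ y → R x y → ¬ R y x) :
    ∃ x ∈ S, 2 * {y ∈ S | y ≠ x ∧ R x y}.card ≤ S.card - 1 := by
  have hswap : ∑ x ∈ S, {y ∈ S | y ≠ x ∧ R x y}.card =
      ∑ x ∈ S, {y ∈ S | y ≠ x ∧ R y x}.card := by
    simp only [card_filter]
    rw [sum_comm]
    exact sum_congr rfl fun x _ => sum_congr rfl fun y _ => by simp only [ne_comm]
  have hsum : ∑ x ∈ S, 2 * {y ∈ S | y ≠ x ∧ R x y}.card ≤ ∑ _x ∈ S, (S.card - 1) := by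
    rw [← mul_sum, two_mul]
    nth_rewrite 2 [hswap]
    rw [← sum_add_distrib]
    refine sum_le_sum fun x hx => ?_
    rw [← card_union_of_disjoint, ← card_erase_of_mem hx]
    · exact card_le_card fun y => by simp only [mem_union, mem_filter, mem_erase]; tauto
    · exact disjoint_filter.2 fun y hy ⟨hyx, hxy⟩ ⟨_, hyx'⟩ => hR x hx y hy hyx.symm hxy hyx'
  exact exists_le_of_sum_le hS hsum

end Finset

section EdgeColoring

variable {V C : Type*}

def IsProperlyColoredTriangle (c : Sym2 V → C) (v x y : V) : Prop :=
  v ≠ x ∧ v ≠ y ∧ x ≠ y ∧ c s(v, x) ≠ c s(x, y) ∧ c s(x, y) ≠ c s(y, v) ∧ c s(y, v) ≠ c s(v, x)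

lemma color_eq_or_color_eq_of_forall_not_isProperlyColoredTriangle {c : Sym2 V → C} {v : V}
    (h : ∀ x y, ¬ IsProperlyColoredTriangle c v x y)
    {x y : V} (hx : x ≠ v) (hy : y ≠ v) (hxy : x ≠ y) (hc : c s(v, x) ≠ c s(v, y)) :
    c s(x, y) = c s(v, x) ∨ c s(x, y) = c s(v, y) := by
  by_contra! hne
  refine h x y ⟨hx.symm, hy.symm, hxy, Ne.symm hne.1, ?_, ?_⟩ <;> rw [Sym2.eq_swap (a := y)]
  exacts [hne.2, hc.symm]

variable [Fintype V] [DecidableEq V] [DecidableEq C]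

def colorDegree (c : Sym2 V → C) (x : V) : ℕ := ((univ.erase x).image fun y => c s(x, y)).card

lemma ncard_image_eq_colorDegree (c : Sym2 V → C) (x : V) :
    ((fun y => c s(x, y)) '' {y : V | y ≠ x}).ncard = colorDegree c x := by
  rw [colorDegree, ← Set.ncard_coe_finset]
  congr
  ext
  simp

lemma colorDegree_le_of_mem_uniqueFiberPoints {c : Sym2 V → C} {v : V}
    (h : ∀ x y, ¬ IsProperlyColoredTriangle c v x y) {x : V}
    (hx : x ∈ uniqueFiberPoints (fun u => c s(v, u)) (univ.erase v)) :
    colorDegree c x ≤ 1 + (sharedValues (fun u => c s(v, u)) (univ.erase v)).card +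
      {u ∈ uniqueFiberPoints (fun u => c s(v, u)) (univ.erase v) |
        u ≠ x ∧ c s(x, u) = c s(v, u)}.card := by
  set col : V → C := fun u => c s(v, u)
  set U := uniqueFiberPoints col (univ.erase v)
  set D := {u ∈ U | u ≠ x ∧ c s(x, u) = col u}
  have hxv : x ≠ v := ne_of_mem_erase (uniqueFiberPoints_subset hx)
  have hsub : (univ.erase x).image (fun y => c s(x, y)) ⊆
      insert (col x) (sharedValues col (univ.erase v) ∪ D.image col) := by
    intro k hk
    obtain ⟨y, hy, rfl⟩ := mem_image.1 hk
    have hyx := ne_of_mem_erase hy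
    rcases eq_or_ne y v with rfl | hyv
    · exact mem_insert.2 (Or.inl (congrArg c Sym2.eq_swap))
    have hyW : y ∈ univ.erase v := mem_erase.2 ⟨hyv, mem_univ y⟩
    have hcol : col x ≠ col y := fun hxy => hyx (eq_of_mem_uniqueFiberPoints hx hyW hxy.symm)
    rcases color_eq_or_color_eq_of_forall_not_isProperlyColoredTriangle h hxv hyv hyx.symm hcol
      with hc | hc
    · exact mem_insert.2 (Or.inl hc)
    refine mem_insert_of_mem (hc ▸ ?_)
    by_cases hyU : y ∈ U
    · exact mem_union_right _ (mem_image_of_mem col (mem_filter.2 ⟨hyU, hyx, hc⟩))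
    · exact mem_union_left _ (mem_sharedValues_of_notMem_uniqueFiberPoints hyW hyU)
  calc colorDegree c x
      ≤ (insert (col x) (sharedValues col (univ.erase v) ∪ D.image col)).card :=
        card_le_card hsub
    _ ≤ 1 + ((sharedValues col (univ.erase v)).card + (D.image col).card) :=
        (card_insert_le _ _).trans (by rw [add_comm]; gcongr; exact card_union_le _ _)
    _ ≤ 1 + (sharedValues col (univ.erase v)).card + D.card := by
        rw [← add_assoc]; gcongr; exact card_image_le

end EdgeColoring

theorem stmt_10_general {V C : Type*} [Fintype V] (c : Sym2 V → C)
    (hdeg : ∀ x : V,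
      Fintype.card V + 1 ≤ 2 * Set.ncard ((fun y => c s(x, y)) '' {y : V | y ≠ x})) :
    ∀ v : V, ∃ x y : V, v ≠ x ∧ v ≠ y ∧ x ≠ y ∧
      c s(v, x) ≠ c s(x, y) ∧ c s(x, y) ≠ c s(y, v) ∧ c s(y, v) ≠ c s(v, x) := by
  classical
  intro v
  by_contra hv
  have hnot : ∀ x y, ¬ IsProperlyColoredTriangle c v x y := fun x y hxy => hv ⟨x, y, hxy⟩
  have hdeg' x := ncard_image_eq_colorDegree c x ▸ hdeg x
  have hcard : (univ.erase v).card = Fintype.card V - 1 := card_erase_of_mem (mem_univ v)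
  have hsplit : colorDegree c v = _ := card_image_eq_card_uniqueFiberPoints_add_card_sharedValues
    (f := fun u => c s(v, u)) (W := univ.erase v)
  have hshared := card_uniqueFiberPoints_add_two_mul_card_sharedValues_le
    (f := fun u => c s(v, u)) (W := univ.erase v)
  have hU : (uniqueFiberPoints (fun u => c s(v, u)) (univ.erase v)).Nonempty := by
    have := hdeg' v
    rw [← card_pos]
    omega
  have hasymm : ∀ x ∈ uniqueFiberPoints (fun u => c s(v, u)) (univ.erase v),
      ∀ u ∈ uniqueFiberPoints (fun u => c s(v, u)) (univ.erase v),
      x ≠ u → c s(x, u) = c s(v, u) → c s(u, x) ≠ c s(v, x) := fun x hx u hu hxu hxu' hux =>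
    hxu <| eq_of_mem_uniqueFiberPoints hu (uniqueFiberPoints_subset hx)
      (by rw [← hxu', ← hux, Sym2.eq_swap])
  obtain ⟨x, hx, hout⟩ :=
    exists_two_mul_card_le_of_asymm hU (fun x u => c s(x, u) = c s(v, u)) hasymm
  have := colorDegree_le_of_mem_uniqueFiberPoints hnot hx
  have := hdeg' x
  have := hdeg' v
  omega

/-- Every vertex of an edge-colored complete graph of order `n ≥ 3` with all color degrees
at least `(n+1)/2` lies on a properly colored cycle of length 3. -/
theorem stmt_10 {V C : Type*} [Fintype V] (c : Sym2 V → C)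
    (hn : 3 ≤ Fintype.card V)
    (hdeg : ∀ x : V,
      Fintype.card V + 1 ≤ 2 * Set.ncard ((fun y => c s(x, y)) '' {y : V | y ≠ x})) :
    ∀ v : V, ∃ x y : V, v ≠ x ∧ v ≠ y ∧ x ≠ y ∧
      c s(v, x) ≠ c s(x, y) ∧ c s(x, y) ≠ c s(y, v) ∧ c s(y, v) ≠ c s(v, x) :=
  stmt_10_general c hdeg
end

section
/- Let G be an edge-colored complete graph of order n ≥ 4 such that every vertex x has color degree δ^c(x) ≥ (n+1)/2. Then every vertex of G is contained in a properly colored cycle of length 4. -/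
/-!
Fix `v` and suppose no properly colored 4-cycle passes through it. For `y ≠ v` let `S y` be the
set of middles `u` of properly colored paths `v u y`, and `D u` the set of their ends `y`. The
colors at `u ≠ v` are `c(uv)` and those on edges to `D u`, so `n - 1 ≤ 2 |D u|`. Two middles
`x, z ∈ S y` with `c(vx) ≠ c(vz)` force `c(xy) = c(yz)`, so either the edges from `v` to `S y` are
monochromatic, and then `S y` lies in a color class at `v`, of size at most `(n - 1) / 2`; or the
edges from `y` to `S y` are, and counting the colors at `y` gives `|S y| < |D y|`. As
`∑ |S y| = ∑ |D u|`, equality holds throughout, so every `S y` is a whole color class at `v`.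
For `u ∈ S y` the classes `S y` and `S u` differ (`u ∉ S u`), hence cover all `n - 1` neighbours
of `v`, and `v` sees only two colors, contradicting `δ^c(v) ≥ (n + 1) / 2 > 2`.
-/

open Finset

lemma const_on_or_const_on_of_ne_imp_eq {β C D : Type*} {s : Set β} {f : β → C} {g : β → D}
    (h : ∀ x ∈ s, ∀ z ∈ s, f x ≠ f z → g x = g z) :
    (∀ x ∈ s, ∀ z ∈ s, f x = f z) ∨ ∀ x ∈ s, ∀ z ∈ s, g x = g z := by
  by_contra! hne
  obtain ⟨⟨x₁, hx₁, z₁, hz₁, hf⟩, x₂, hx₂, z₂, hz₂, hg⟩ := hne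
  have hconst : ∀ x ∈ s, g x = g x₁ := fun x hx => by
    by_cases hfx : f x = f x₁
    · exact (h x hx z₁ hz₁ (hfx ▸ hf)).trans (h x₁ hx₁ z₁ hz₁ hf).symm
    · exact h x hx x₁ hx₁ hfx
  exact hg ((hconst x₂ hx₂).trans (hconst z₂ hz₂).symm)

lemma card_image_le_card_add_card_filter_notMem {β C : Type*} [DecidableEq C] (s : Finset β)
    (f : β → C) (A : Finset C) : #(s.image f) ≤ #A + #{x ∈ s | f x ∉ A} := by
  calc #(s.image f) ≤ #(A ∪ {x ∈ s | f x ∉ A}.image f) := by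
        refine card_le_card fun b hb => ?_
        obtain ⟨x, hx, rfl⟩ := mem_image.1 hb
        by_cases hxA : f x ∈ A
        · exact mem_union_left _ hxA
        · exact mem_union_right _ (mem_image_of_mem f (mem_filter.2 ⟨hx, hxA⟩))
    _ ≤ #A + #({x ∈ s | f x ∉ A}.image f) := card_union_le _ _
    _ ≤ #A + #{x ∈ s | f x ∉ A} := by gcongr; exact card_image_le

namespace EdgeColoring

section ProperPaths

variable {V C : Type*} (c : Sym2 V → C)

def OnProperFourCycle (v : V) : Prop :=
  ∃ x y z : V, v ≠ x ∧ v ≠ y ∧ v ≠ z ∧ x ≠ y ∧ x ≠ z ∧ y ≠ z ∧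
    c s(v, x) ≠ c s(x, y) ∧ c s(x, y) ≠ c s(y, z) ∧ c s(y, z) ≠ c s(z, v) ∧ c s(z, v) ≠ c s(v, x)

/-- `y ≠ v` is not required: it follows from the color condition. -/
def IsProperPath (v u y : V) : Prop := u ≠ v ∧ u ≠ y ∧ c s(v, u) ≠ c s(u, y)

instance [DecidableEq V] [DecidableEq C] (v u y : V) : Decidable (IsProperPath c v u y) :=
  inferInstanceAs (Decidable (_ ∧ _ ∧ _))

variable {c}

lemma IsProperPath.ne_left {v u y : V} (h : IsProperPath c v u y) : y ≠ v := by
  rintro rfl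
  exact h.2.2 (congrArg c (Sym2.eq_swap))

lemma onProperFourCycle_of_isProperPath {v x y z : V} (hx : IsProperPath c v x y)
    (hz : IsProperPath c v z y) (hxz : c s(v, x) ≠ c s(v, z)) (hxyz : c s(x, y) ≠ c s(y, z)) :
    OnProperFourCycle c v := by
  refine ⟨x, y, z, hx.1.symm, hx.ne_left.symm, hz.1.symm, hx.2.1, ?_, hz.2.1.symm, hx.2.2, hxyz,
    ?_, ?_⟩
  · rintro rfl
    exact hxz rfl
  · rw [Sym2.eq_swap (a := z), Sym2.eq_swap (a := y)]
    exact hz.2.2.symm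
  · rw [Sym2.eq_swap (a := z)]
    exact hxz.symm

end ProperPaths

section ColorDegree

variable {V C : Type*} [Fintype V] [DecidableEq V] [DecidableEq C] (c : Sym2 V → C)

def colorDegree (x : V) : ℕ := #((univ.erase x).image fun y => c s(x, y))

def colorNbhd (x : V) (a : C) : Finset V := {y | y ≠ x ∧ c s(x, y) = a}

def ends (v u : V) : Finset V := {y | IsProperPath c v u y}

def middles (v y : V) : Finset V := {u | IsProperPath c v u y}

lemma ncard_image_eq_colorDegree (x : V) :
    Set.ncard ((fun y => c s(x, y)) '' {y | y ≠ x}) = colorDegree c x := by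
  rw [colorDegree, ← Set.ncard_coe_finset, coe_image, coe_erase, coe_univ,
    ← Set.compl_eq_univ_sdiff]
  rfl

lemma colorDegree_le (x : V) (A : Finset C) :
    colorDegree c x ≤ #A + #({y | y ≠ x ∧ c s(x, y) ∉ A} : Finset V) := by
  unfold colorDegree
  convert card_image_le_card_add_card_filter_notMem (univ.erase x) (fun y => c s(x, y)) A
    using 3
  ext y
  simp [and_comm]

lemma colorDegree_add_card_le (x : V) (A : Finset C) (T : Finset V)
    (hT : ∀ y ∈ T, y ≠ x ∧ c s(x, y) ∈ A) : colorDegree c x + #T + 1 ≤ Fintype.card V + #A := by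
  have hdisj : Disjoint T ({y | y ≠ x ∧ c s(x, y) ∉ A} : Finset V) :=
    disjoint_left.2 fun y hy hy' => (mem_filter.1 hy').2.2 (hT y hy).2
  have hsub : T ∪ ({y | y ≠ x ∧ c s(x, y) ∉ A} : Finset V) ⊆ univ.erase x := fun y hy => by
    rcases mem_union.1 hy with hy | hy
    · exact mem_erase.2 ⟨(hT y hy).1, mem_univ y⟩
    · exact mem_erase.2 ⟨(mem_filter.1 hy).2.1, mem_univ y⟩
  have hcard := card_le_card hsub
  rw [card_union_of_disjoint hdisj, card_erase_of_mem (mem_univ x), card_univ] at hcard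
  have := colorDegree_le c x A
  have : 0 < Fintype.card V := Fintype.card_pos_iff.2 ⟨x⟩
  omega

lemma colorDegree_add_card_colorNbhd_le (x : V) (a : C) :
    colorDegree c x + #(colorNbhd c x a) ≤ Fintype.card V := by
  have := colorDegree_add_card_le c x {a} (colorNbhd c x a) fun y hy => by
    simpa [colorNbhd] using hy
  rw [card_singleton] at this
  omega

variable {c}

lemma middles_self (v : V) : middles c v v = ∅ :=
  filter_eq_empty_iff.2 fun _ _ h => h.ne_left rfl

lemma colorDegree_le_card_ends_add_one {u v : V} (hu : u ≠ v) :
    colorDegree c u ≤ #(ends c v u) + 1 := by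
  have h := colorDegree_le c u {c s(u, v)}
  have hends : ({y | y ≠ u ∧ c s(u, y) ∉ ({c s(u, v)} : Finset C)} : Finset V) = ends c v u := by
    ext y
    simp [ends, IsProperPath, hu, eq_comm, Sym2.eq_swap]
  rw [card_singleton, hends] at h
  omega

end ColorDegree

section DegreeCondition

variable {V C : Type*} [Fintype V] [DecidableEq V] [DecidableEq C] {c : Sym2 V → C} {v : V}

lemma card_colorNbhd_le_card_ends
    (hdeg : ∀ x, Fintype.card V + 1 ≤ 2 * colorDegree c x) {y : V} (hy : y ≠ v) (a : C) :
    #(colorNbhd c v a) ≤ #(ends c v y) := by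
  have := colorDegree_add_card_colorNbhd_le c v a
  have := colorDegree_le_card_ends_add_one (c := c) hy
  have := hdeg v
  have := hdeg y
  omega

lemma card_middles_lt_of_color_eq (hn : 4 ≤ Fintype.card V)
    (hdeg : ∀ x, Fintype.card V + 1 ≤ 2 * colorDegree c x) {y : V} (hy : y ≠ v) (γ : C)
    (hγ : ∀ u ∈ middles c v y, c s(u, y) = γ) : #(middles c v y) < #(ends c v y) := by
  have hDy := colorDegree_le_card_ends_add_one (c := c) hy
  have := hdeg y
  have hmem : ∀ u ∈ middles c v y, u ≠ y ∧ c s(y, u) = γ := fun u hu =>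
    ⟨(mem_filter.1 hu).2.2.1, by rw [Sym2.eq_swap]; exact hγ u hu⟩
  by_cases hγv : γ = c s(y, v)
  · have hv : v ∉ middles c v y := fun h => (mem_filter.1 h).2.1 rfl
    have := colorDegree_add_card_le c y {γ} (insert v (middles c v y)) fun u hu => by
      rcases mem_insert.1 hu with rfl | hu
      · exact ⟨hy.symm, hγv ▸ mem_singleton_self _⟩
      · exact ⟨(hmem u hu).1, (hmem u hu).2 ▸ mem_singleton_self _⟩
    rw [card_insert_of_notMem hv, card_singleton] at this
    omega
  · have hsub : middles c v y ⊆ ends c v y := fun u hu => by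
      refine mem_filter.2 ⟨mem_univ u, hy, (hmem u hu).1.symm, fun h => hγv ?_⟩
      rw [← (hmem u hu).2, ← h, Sym2.eq_swap]
    have hrest : ({w | w ≠ y ∧ c s(y, w) ∉ ({γ, c s(y, v)} : Finset C)} : Finset V) ⊆
        ends c v y \ middles c v y := fun w hw => by
      obtain ⟨hwy, hwc⟩ := (mem_filter.1 hw).2
      simp only [mem_insert, mem_singleton, not_or] at hwc
      refine mem_sdiff.2 ⟨mem_filter.2 ⟨mem_univ w, hy, hwy.symm, ?_⟩,
        fun hw' => hwc.1 (hmem w hw').2⟩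
      rw [Sym2.eq_swap]
      exact Ne.symm hwc.2
    have hrest_card := card_le_card hrest
    rw [card_sdiff_of_subset hsub] at hrest_card
    have := colorDegree_le c y {γ, c s(y, v)}
    have := card_le_two (a := γ) (b := c s(y, v))
    omega

lemma middles_eq_colorNbhd (hdeg : ∀ x, Fintype.card V + 1 ≤ 2 * colorDegree c x) {y : V}
    (hy : y ≠ v) (a : C) (ha : ∀ u ∈ middles c v y, c s(v, u) = a)
    (hle : #(ends c v y) ≤ #(middles c v y)) : middles c v y = colorNbhd c v a :=
  eq_of_subset_of_card_le (fun u hu => mem_filter.2 ⟨mem_univ u, (mem_filter.1 hu).2.1, ha u hu⟩)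
    ((card_colorNbhd_le_card_ends hdeg hy a).trans hle)

lemma card_middles_lt_or_eq_colorNbhd (hn : 4 ≤ Fintype.card V)
    (hdeg : ∀ x, Fintype.card V + 1 ≤ 2 * colorDegree c x) (hv : ¬ OnProperFourCycle c v)
    {y : V} (hy : y ≠ v) :
    #(middles c v y) < #(ends c v y) ∨ ∃ a, middles c v y = colorNbhd c v a := by
  refine or_iff_not_imp_left.2 fun hlt => ?_
  rw [not_lt] at hlt
  obtain ⟨u₀, hu₀⟩ : (middles c v y).Nonempty := by
    have := colorDegree_le_card_ends_add_one (c := c) hy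
    have := hdeg y
    exact card_pos.1 (by omega)
  have hcycle : ∀ x ∈ (middles c v y : Set V), ∀ z ∈ (middles c v y : Set V),
      c s(v, x) ≠ c s(v, z) → c s(x, y) = c s(z, y) := fun x hx z hz hxz => by
    by_contra hxyz
    rw [Sym2.eq_swap (a := z)] at hxyz
    exact hv (onProperFourCycle_of_isProperPath (mem_filter.1 hx).2 (mem_filter.1 hz).2 hxz hxyz)
  rcases const_on_or_const_on_of_ne_imp_eq hcycle with hva | hyc
  · exact ⟨_, middles_eq_colorNbhd hdeg hy _ (fun u hu => hva u hu u₀ hu₀) hlt⟩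
  · exact absurd (card_middles_lt_of_color_eq hn hdeg hy _ fun u hu => hyc u hu u₀ hu₀)
      hlt.not_gt

lemma card_middles_eq_card_ends (hn : 4 ≤ Fintype.card V)
    (hdeg : ∀ x, Fintype.card V + 1 ≤ 2 * colorDegree c x) (hv : ¬ OnProperFourCycle c v) (y : V) :
    #(middles c v y) = #(ends c v y) := by
  have hle : ∀ y, #(middles c v y) ≤ #(ends c v y) := fun y => by
    by_cases hy : y = v
    · simp [hy, middles_self]
    rcases card_middles_lt_or_eq_colorNbhd hn hdeg hv hy with hlt | ⟨a, ha⟩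
    · exact hlt.le
    · exact ha ▸ card_colorNbhd_le_card_ends hdeg hy a
  have hsum : ∑ u, #(ends c v u) = ∑ y, #(middles c v y) :=
    sum_card_bipartiteAbove_eq_sum_card_bipartiteBelow _ (s := univ) (t := univ)
  exact (sum_eq_sum_iff_of_le fun y _ => hle y).1 hsum.symm y (mem_univ y)

theorem onProperFourCycle (hn : 4 ≤ Fintype.card V)
    (hdeg : ∀ x, Fintype.card V + 1 ≤ 2 * colorDegree c x) (v : V) : OnProperFourCycle c v := by
  by_contra hv
  have hfib : ∀ y ≠ v, ∃ a, middles c v y = colorNbhd c v a := fun y hy =>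
    (card_middles_lt_or_eq_colorNbhd hn hdeg hv hy).resolve_left
      (card_middles_eq_card_ends hn hdeg hv y).not_lt
  have hhalf : ∀ y ≠ v, Fintype.card V ≤ 2 * #(middles c v y) + 1 := fun y hy => by
    have := card_middles_eq_card_ends hn hdeg hv y
    have := colorDegree_le_card_ends_add_one (c := c) hy
    have := hdeg y
    omega
  obtain ⟨y, hy⟩ := Fintype.exists_ne_of_one_lt_card (by omega) v
  obtain ⟨u, hu⟩ : (middles c v y).Nonempty := card_pos.1 (by have := hhalf y hy; omega)
  have huv : u ≠ v := (mem_filter.1 hu).2.1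
  obtain ⟨a, ha⟩ := hfib y hy
  obtain ⟨b, hb⟩ := hfib u huv
  have hab : a ≠ b := by
    rintro rfl
    have hu' : u ∈ middles c v u := hb ▸ ha ▸ hu
    exact (mem_filter.1 hu').2.2.1 rfl
  have hdisj : Disjoint (colorNbhd c v a) (colorNbhd c v b) :=
    disjoint_left.2 fun w hwa hwb =>
      hab ((mem_filter.1 hwa).2.2.symm.trans (mem_filter.1 hwb).2.2)
  have hcover := colorDegree_add_card_le c v {a, b} (colorNbhd c v a ∪ colorNbhd c v b)
    fun w hw => by
      rcases mem_union.1 hw with hw | hw <;> refine ⟨(mem_filter.1 hw).2.1, ?_⟩ <;>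
        simp [(mem_filter.1 hw).2.2]
  rw [card_union_of_disjoint hdisj, ← ha, ← hb] at hcover
  have := hhalf y hy
  have := hhalf u huv
  have := card_le_two (a := a) (b := b)
  have := hdeg v
  omega

end DegreeCondition

end EdgeColoring

/-- Every vertex of an edge-colored complete graph of order `n ≥ 4` with all color degrees
at least `(n+1)/2` lies on a properly colored cycle of length 4. -/
theorem stmt_11 {V C : Type*} [Fintype V] (c : Sym2 V → C)
    (hn : 4 ≤ Fintype.card V)
    (hdeg : ∀ x : V,
      Fintype.card V + 1 ≤ 2 * Set.ncard ((fun y => c s(x, y)) '' {y : V | y ≠ x})) :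
    ∀ v : V, ∃ x y z : V, v ≠ x ∧ v ≠ y ∧ v ≠ z ∧ x ≠ y ∧ x ≠ z ∧ y ≠ z ∧
      c s(v, x) ≠ c s(x, y) ∧ c s(x, y) ≠ c s(y, z) ∧
      c s(y, z) ≠ c s(z, v) ∧ c s(z, v) ≠ c s(v, x) := by
  classical
  exact EdgeColoring.onProperFourCycle hn fun x =>
    EdgeColoring.ncard_image_eq_colorDegree c x ▸ hdeg x
end
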